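/- arXiv:1908.08428 — 2 statements merged into one kernel-verified Lean document; each statement's English description precedes it below -/
import Mathlib

section
/- Let f : U → ℝ be smooth, and let N = (−f_x, −f_y, 1)/√(1+f_x²+f_y²) be the unit normal to the graph of f. For any unit vector m = (m₁, m₂, m₃) ∈ ℝ³ and the so(3)-valued 1-form A = κ((T₁ + f_x T₃)dx + (T₂ + f_y T₃)dy), the squared norm |A(m)|² computed with the inverse induced metric equals κ²(1 + (m·N)²). -/
/-- The Levi-Civita symbol on three indices. -/
noncomputable def eps (i j k : Fin 3) : ℝ :=
  ((((j : ℤ) - (i : ℤ)) * (((k : ℤ) - (i : ℤ))) * (((k : ℤ) - (j : ℤ)))) / 2 : ℤ)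

/-- The standard basis of so(3): `(T A)_{ab} = ε_{Aab}`. -/
noncomputable def T (A : Fin 3) : Matrix (Fin 3) (Fin 3) ℝ :=
  Matrix.of fun a b => eps A a b

/-!
Writing `X₁ = (1, 0, f_x)` and `X₂ = (0, 1, f_y)` for the tangent vectors of the graph, one has
`T_A m = m × e_A`, so `A_i(m) = κ m × X_i`. The identity
`(m × X_i)·(m × X_j) = |m|² X_i·X_j − (m·X_i)(m·X_j)` turns `|A(m)|²` into
`κ² (g^{ij} g_{ij} − g^{ij}(m·X_i)(m·X_j))`. The first contraction is `tr (g⁻¹ g) = 2`, the second is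
the squared length `1 − (m·N)²` of the tangential part of the unit vector `m`.
-/

open Matrix

theorem T_mulVec (A : Fin 3) (m : Fin 3 → ℝ) : T A *ᵥ m = m ⨯₃ Pi.single A 1 := by
  ext a
  fin_cases A <;> fin_cases a <;>
    simp [T, eps, mulVec, dotProduct, Fin.sum_univ_three, cross_apply]

theorem smul_T_add_smul_T_mulVec (κ c : ℝ) (A B : Fin 3) (m : Fin 3 → ℝ) :
    (κ • (T A + c • T B)) *ᵥ m = κ • m ⨯₃ (Pi.single A 1 + c • Pi.single B 1) := by
  simp only [smul_mulVec, add_mulVec, T_mulVec, map_add, map_smul]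

theorem sum_smul_cross_dot_cross {R ι : Type*} [CommRing R] [Fintype ι] (G : Matrix ι ι R)
    (u : Fin 3 → R) (X : ι → Fin 3 → R) :
    ∑ i, ∑ j, G i j * (u ⨯₃ X i ⬝ᵥ u ⨯₃ X j) =
      u ⬝ᵥ u * ∑ i, ∑ j, G i j * (X i ⬝ᵥ X j) - ∑ i, ∑ j, G i j * (u ⬝ᵥ X i * u ⬝ᵥ X j) := by
  simp only [cross_dot_cross, Finset.mul_sum, ← Finset.sum_sub_distrib, dotProduct_comm (X _) u]
  refine Finset.sum_congr rfl fun i _ => Finset.sum_congr rfl fun j _ => ?_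
  ring

-- `∂_x` and `∂_y` of the embedding `(x, y) ↦ (x, y, f x y)`.
def graphTangent (fx fy : ℝ) : Fin 2 → Fin 3 → ℝ := ![![1, 0, fx], ![0, 1, fy]]

-- The inverse of the Gram matrix `X_i ⬝ᵥ X_j` of `graphTangent`.
noncomputable def graphMetricInv (fx fy : ℝ) : Matrix (Fin 2) (Fin 2) ℝ :=
  (1 / (1 + fx ^ 2 + fy ^ 2)) • !![1 + fy ^ 2, -(fx * fy); -(fx * fy), 1 + fx ^ 2]

noncomputable def graphNormal (fx fy : ℝ) : Fin 3 → ℝ :=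
  fun a => ![-fx, -fy, 1] a / Real.sqrt (1 + fx ^ 2 + fy ^ 2)

theorem sum_graphMetricInv_mul_dot (fx fy : ℝ) :
    ∑ i, ∑ j, graphMetricInv fx fy i j * (graphTangent fx fy i ⬝ᵥ graphTangent fx fy j) = 2 := by
  have : 1 + fx ^ 2 + fy ^ 2 ≠ 0 := by positivity
  simp [graphMetricInv, graphTangent, Fin.sum_univ_two, vec3_dotProduct]
  field_simp
  ring

theorem dot_graphNormal_sq (fx fy : ℝ) (m : Fin 3 → ℝ) :
    (m ⬝ᵥ graphNormal fx fy) ^ 2 = (m 2 - fx * m 0 - fy * m 1) ^ 2 / (1 + fx ^ 2 + fy ^ 2) := by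
  have hpos : 0 < 1 + fx ^ 2 + fy ^ 2 := by positivity
  simp only [graphNormal, vec3_dotProduct, Matrix.cons_val_zero, Matrix.cons_val_one,
    Matrix.cons_val_two, Matrix.head_cons, Matrix.tail_cons]
  field_simp
  rw [Real.sq_sqrt hpos.le]
  ring

theorem sum_graphMetricInv_mul_dot_mul_dot (fx fy : ℝ) (m : Fin 3 → ℝ) :
    ∑ i, ∑ j, graphMetricInv fx fy i j * (m ⬝ᵥ graphTangent fx fy i * m ⬝ᵥ graphTangent fx fy j) =
      m ⬝ᵥ m - (m ⬝ᵥ graphNormal fx fy) ^ 2 := by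
  have : 1 + fx ^ 2 + fy ^ 2 ≠ 0 := by positivity
  rw [dot_graphNormal_sq]
  simp [graphMetricInv, graphTangent, Fin.sum_univ_two, vec3_dotProduct]
  field_simp
  ring

/-- for the so(3)-valued 1-form
`A = κ((T₁ + f_x T₃)dx + (T₂ + f_y T₃)dy)` on the graph of `f`, a unit vector `m`,
and the unit normal `N = (−f_x, −f_y, 1)/√(1+f_x²+f_y²)`, the squared norm of
`A(m)` computed with the inverse induced metric equals `κ²(1 + (m·N)²)`. -/
theorem A_m_squared_norm (κ fx fy : ℝ) (m : Fin 3 → ℝ)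
    (hm : ∑ a : Fin 3, m a ^ 2 = 1) :
    let N : Fin 3 → ℝ := fun a => ![-fx, -fy, 1] a / Real.sqrt (1 + fx ^ 2 + fy ^ 2)
    let ginv : Matrix (Fin 2) (Fin 2) ℝ :=
      (1 / (1 + fx ^ 2 + fy ^ 2)) •
        !![1 + fy ^ 2, -(fx * fy); -(fx * fy), 1 + fx ^ 2]
    let Am : Fin 2 → Fin 3 → ℝ :=
      ![(κ • (T 0 + fx • T 2)).mulVec m, (κ • (T 1 + fy • T 2)).mulVec m]
    ∑ i : Fin 2, ∑ j : Fin 2, ginv i j * (∑ a : Fin 3, Am i a * Am j a) =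
      κ ^ 2 * (1 + (∑ a : Fin 3, m a * N a) ^ 2) := by
  intro N ginv Am
  have hAm : Am = fun i => κ • m ⨯₃ graphTangent fx fy i := by
    have h0 : Pi.single 0 1 + fx • Pi.single 2 1 = graphTangent fx fy 0 := by
      ext a; fin_cases a <;> simp [graphTangent]
    have h1 : Pi.single 1 1 + fy • Pi.single 2 1 = graphTangent fx fy 1 := by
      ext a; fin_cases a <;> simp [graphTangent]
    ext i : 1
    fin_cases i
    · exact (smul_T_add_smul_T_mulVec κ fx 0 2 m).trans (by rw [h0]; rfl)
    · exact (smul_T_add_smul_T_mulVec κ fy 1 2 m).trans (by rw [h1]; rfl)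
  have hmm : m ⬝ᵥ m = 1 := by simpa [dotProduct, sq] using hm
  calc ∑ i, ∑ j, ginv i j * (∑ a, Am i a * Am j a)
      = κ ^ 2 * ∑ i, ∑ j, graphMetricInv fx fy i j *
          (m ⨯₃ graphTangent fx fy i ⬝ᵥ m ⨯₃ graphTangent fx fy j) := by
        change ∑ i, ∑ j, ginv i j * (Am i ⬝ᵥ Am j) = _
        simp only [hAm, smul_dotProduct, dotProduct_smul, smul_eq_mul, Finset.mul_sum]
        refine Finset.sum_congr rfl fun i _ => Finset.sum_congr rfl fun j _ => ?_
        rw [graphMetricInv]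
        ring
    _ = κ ^ 2 * (1 + (m ⬝ᵥ graphNormal fx fy) ^ 2) := by
        rw [sum_smul_cross_dot_cross, sum_graphMetricInv_mul_dot,
          sum_graphMetricInv_mul_dot_mul_dot, hmm]
        ring
end

section
/- On the cylinder of radius R, the axially symmetric ansatz v = h(t)e^{iθ} reduces the Bogomolny equation ∂_t v + (i/R)∂_θ v = i e^{−iθ}(v − e^{iθ})² to the ODE h'(t) = h(t)/R + i(h(t) − 1)², and the function h_c(t) = (i√(1−4iR)/(2R)) tanh((1/2)√(1−4iR)(c + t/R)) + i/(2R) + 1 solves this ODE for every complex constant c. -/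
open Complex

/-! For `v = h e^{iθ}` one has `∂_θ v = i v` and `e^{−iθ}(v − e^{iθ})² = e^{iθ}(h − 1)²`, so the
Bogomolny equation is `e^{iθ}` times the ODE. Writing `h = 1 + i/(2R) + i k w` with `k = s/(2R)`,
`s² = 1 − 4iR`, the Riccati equation `h' = h/R + i(h − 1)²` becomes `w' = k(1 − w²)`, which
`w = tanh (k (R c + t))` solves. -/

theorem Complex.hasDerivAt_tanh {z : ℂ} (hz : cosh z ≠ 0) :
    HasDerivAt tanh (1 - tanh z ^ 2) z := by
  have hquot := (hasDerivAt_sinh z).div (hasDerivAt_cosh z) hz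
  have htanh : tanh = sinh / cosh := funext tanh_eq_sinh_div_cosh
  refine htanh ▸ hquot.congr_deriv ?_
  rw [Pi.div_apply]
  field_simp

theorem hasDerivAt_mul_exp_I_mul (a : ℂ) (θ : ℝ) :
    HasDerivAt (fun θ' : ℝ => a * exp (I * θ')) (a * (I * exp (I * θ))) θ := by
  have := (((hasDerivAt_id (θ : ℂ)).const_mul I).cexp.const_mul a).comp_ofReal
  simpa only [id, mul_one, mul_comm (exp _)] using this

theorem bogomolny_ansatz_iff {R d h e : ℂ} (he : e ≠ 0) :
    d * e + I / R * (h * (I * e)) = I * e⁻¹ * (h * e - e) ^ 2 ↔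
      d = h / R + I * (h - 1) ^ 2 := by
  have hfactor : d * e + I / R * (h * (I * e)) - I * e⁻¹ * (h * e - e) ^ 2 =
      e * (d - (h / R + I * (h - 1) ^ 2)) := by
    linear_combination h * e * R⁻¹ * I_sq - I * e * (h - 1) ^ 2 * mul_inv_cancel₀ he
  rw [← sub_eq_zero, hfactor, mul_eq_zero, sub_eq_zero, or_iff_right he]

theorem kink_riccati {R : ℂ} (hR : R ≠ 0) {s : ℂ} (hs : s ^ 2 = 1 - 4 * I * R) (T : ℂ) :
    (I * s / (2 * R) * T + I / (2 * R) + 1) / R +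
        I * (I * s / (2 * R) * T + I / (2 * R) + 1 - 1) ^ 2 =
      I * s / (2 * R) * ((1 - T ^ 2) * (s / (2 * R))) := by
  have hk : (s / (2 * R)) ^ 2 = R⁻¹ ^ 2 / 4 - I * R⁻¹ := by
    rw [div_pow, hs]
    field_simp
    ring
  linear_combination (-I) * hk + (I * (s / (2 * R) * T + R⁻¹ / 2) ^ 2 + R⁻¹) * I_sq

/-- on the cylinder of radius `R`, the axially symmetric ansatz
`v = h(t)e^{iθ}` reduces the Bogomolny equation
`∂_t v + (i/R)∂_θ v = i e^{−iθ}(v − e^{iθ})²` to the ODE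
`h' = h/R + i(h−1)²`, and `h_c(t) = (i√(1−4iR)/(2R)) tanh((1/2)√(1−4iR)(c+t/R)) + i/(2R) + 1`
solves this ODE (away from the poles of `tanh`) for every complex constant `c`. -/
theorem cylinder_kink (R : ℝ) (hR : 0 < R) (s : ℂ) (hs : s ^ 2 = 1 - 4 * I * R) :
    (∀ h₀ : ℝ → ℂ,
      ((∀ t θ : ℝ,
          deriv h₀ t * Complex.exp (I * θ) +
            (I / R) * deriv (fun θ' : ℝ => h₀ t * Complex.exp (I * θ')) θ =
          I * Complex.exp (-I * θ) *
            (h₀ t * Complex.exp (I * θ) - Complex.exp (I * θ)) ^ 2) ↔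
        (∀ t : ℝ, deriv h₀ t = h₀ t / R + I * (h₀ t - 1) ^ 2))) ∧
    (∀ (c : ℂ),
      let h : ℝ → ℂ := fun t =>
        I * s / (2 * R) * Complex.tanh ((1 / 2) * s * (c + t / R)) + I / (2 * R) + 1
      ∀ t : ℝ, Complex.cosh ((1 / 2) * s * (c + t / R)) ≠ 0 →
        HasDerivAt h (h t / R + I * (h t - 1) ^ 2) t) := by
  have hR0 : (R : ℂ) ≠ 0 := ofReal_ne_zero.mpr hR.ne'
  refine ⟨fun h₀ => ?_, fun c => ?_⟩
  · simp only [fun t θ => (hasDerivAt_mul_exp_I_mul (h₀ t) θ).deriv, neg_mul, exp_neg,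
      bogomolny_ansatz_iff (exp_ne_zero _), forall_const]
  · intro h t hc
    have harg : HasDerivAt (fun t : ℝ => (1 / 2) * s * (c + t / R)) (s / (2 * R)) t := by
      have := ((((hasDerivAt_id (t : ℂ)).div_const (R : ℂ)).const_add c).const_mul
        ((1 / 2) * s)).comp_ofReal
      exact this.congr_deriv (by ring)
    have htanh := (hasDerivAt_tanh hc).comp t harg
    exact (((htanh.const_mul (I * s / (2 * R))).add_const (I / (2 * R))).add_const 1).congr_deriv
      (kink_riccati hR0 hs _).symm
end
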